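/- With velocity field u(λ,φ) = −b cos λ sin φ, v(λ,φ) = b sin λ, and pressure π₀(λ,φ) = C − (b cos λ cos φ/(2c₀))·(b cos λ cos φ + 2l₀), the steady momentum balance on the sphere holds: (u/cos φ)∂u/∂λ + v∂u/∂φ − (l₀ + u·tan φ)·v + (c₀/cos φ)∂π₀/∂λ = 0 and (u/cos φ)∂v/∂λ + v∂v/∂φ + (l₀ + u·tan φ)·u + c₀∂π₀/∂φ = 0, at every point where cos φ ≠ 0. -/

import Mathlib

/-! Both equations are polynomial identities in `sin` and `cos` once the partial derivatives are
computed; the pressure gradient is `-(b cos λ cos φ + l₀) / c₀` times the gradient of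
`b cos λ cos φ`, and the second equation also needs `sin² φ + cos² φ = 1`. -/

open Real

noncomputable def pdx (g : ℝ → ℝ → ℝ) (a b : ℝ) : ℝ := deriv (fun s => g s b) a
noncomputable def pdy (g : ℝ → ℝ → ℝ) (a b : ℝ) : ℝ := deriv (fun s => g a s) b

/-- Velocity components of the spherical vortex. -/
noncomputable def usph (b : ℝ) (l p : ℝ) : ℝ := -b * Real.cos l * Real.sin p
noncomputable def vsph (b : ℝ) (l p : ℝ) : ℝ := b * Real.sin l

/-- Pressure of the spherical vortex. -/
noncomputable def pisph (b C c₀ l₀ : ℝ) (l p : ℝ) : ℝ :=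
  C - (b * Real.cos l * Real.cos p / (2 * c₀)) * (b * Real.cos l * Real.cos p + 2 * l₀)

theorem HasDerivAt.const_sub_div_mul_add {f : ℝ → ℝ} {f' x : ℝ} (hf : HasDerivAt f f' x)
    (C a c : ℝ) :
    HasDerivAt (fun s => C - f s / (2 * c) * (f s + 2 * a)) (-(f' * (f x + a) / c)) x :=
  ((hasDerivAt_const x C).fun_sub
    ((hf.div_const (2 * c)).fun_mul (hf.add_const (2 * a)))).congr_deriv (by ring)

theorem pdx_usph (b l p : ℝ) : pdx (usph b) l p = b * sin l * sin p :=
  (((hasDerivAt_cos l).const_mul (-b)).mul_const (sin p)).deriv.trans (by ring)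

theorem pdy_usph (b l p : ℝ) : pdy (usph b) l p = -b * cos l * cos p :=
  ((hasDerivAt_sin p).const_mul (-b * cos l)).deriv

theorem pdx_vsph (b l p : ℝ) : pdx (vsph b) l p = b * cos l :=
  ((hasDerivAt_sin l).const_mul b).deriv

theorem pdy_vsph (b l p : ℝ) : pdy (vsph b) l p = 0 :=
  deriv_const p _

theorem pdx_pisph (b C c₀ l₀ l p : ℝ) :
    pdx (pisph b C c₀ l₀) l p = b * sin l * cos p * (b * cos l * cos p + l₀) / c₀ :=
  ((((hasDerivAt_cos l).const_mul b).mul_const (cos p)).const_sub_div_mul_add C l₀ c₀).deriv.trans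
    (by ring)

theorem pdy_pisph (b C c₀ l₀ l p : ℝ) :
    pdy (pisph b C c₀ l₀) l p = b * cos l * sin p * (b * cos l * cos p + l₀) / c₀ :=
  (((hasDerivAt_cos p).const_mul (b * cos l)).const_sub_div_mul_add C l₀ c₀).deriv.trans (by ring)

/-- The spherical vortex field and pressure satisfy the stationary spherical
momentum equations wherever `cos φ ≠ 0`. -/
theorem spherical_vortex_steady_momentum
    (b C l₀ c₀ : ℝ) (hc : 0 < c₀) :
    ∀ l p : ℝ, Real.cos p ≠ 0 →
      ((usph b l p / Real.cos p) * pdx (usph b) l p + vsph b l p * pdy (usph b) l p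
        - (l₀ + usph b l p * Real.tan p) * vsph b l p
        + (c₀ / Real.cos p) * pdx (pisph b C c₀ l₀) l p = 0) ∧
      ((usph b l p / Real.cos p) * pdx (vsph b) l p + vsph b l p * pdy (vsph b) l p
        + (l₀ + usph b l p * Real.tan p) * usph b l p
        + c₀ * pdy (pisph b C c₀ l₀) l p = 0) := by
  intro l p hp
  have hc₀ : c₀ ≠ 0 := hc.ne'
  rw [pdx_usph, pdy_usph, pdx_vsph, pdy_vsph, pdx_pisph, pdy_pisph]
  simp only [usph, vsph, tan_eq_sin_div_cos]
  constructor
  · field_simp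
    ring
  · field_simp
    linear_combination b ^ 2 * cos l ^ 2 * sin p * sin_sq_add_cos_sq p
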